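/- (Variational derivative formula.) For all L ∈ F and all φ ∈ F^{A′}: ⟨j*(∂L), φ⟩ − ev_{jφ}(L) ∈ Div F^M, where ∂L = (∂_a L)_{a∈A} (finitely supported) and ev_{jφ}(L) = Σ_a (jφ)^a·∂_a L. -/

import Mathlib

noncomputable section

variable {𝔽 : Type*} [Field 𝔽] {F : Type*} [CommRing F] [Algebra 𝔽 F] {m : ℕ}
  {A A' : Type*}

/-- Membership in the space of divergences `Div F^M = {Σ_μ D_μ ψ^μ}`. -/
def IsDiv (D : Fin m → Derivation 𝔽 F F) (f : F) : Prop :=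
  ∃ ψ : Fin m → F, f = ∑ μ, D μ (ψ μ)

/-- The evolutionary differentiation `ev_φ f = Σ_a φ^a · ∂_a f` (a finite sum). -/
def ev (pa : A → Derivation 𝔽 F F) (φ : A → F) (f : F) : F :=
  ∑ᶠ a, φ a * pa a f

/-- `(∇φ)^a_μ = D_μ φ^a + Σ_b Γ^a_{μb} · φ^b`; here `Γ b μ a` denotes `Γ^b_{μa}`. -/
def nabla (D : Fin m → Derivation 𝔽 F F) (Γ : A → Fin m → A → F)
    (φ : A → F) (a : A) (μ : Fin m) : F :=
  D μ (φ a) + ∑ᶠ b, Γ a μ b * φ b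

/-- `(∇*χ)_a = -Σ_μ D_μ χ^μ_a + Σ_{μ,b} Γ^b_{μa} · χ^μ_b`. -/
def nablaStar (D : Fin m → Derivation 𝔽 F F) (Γ : A → Fin m → A → F)
    (χ : Fin m → A → F) (a : A) : F :=
  -∑ μ, D μ (χ μ a) + ∑ᶠ b, ∑ μ, Γ b μ a * χ μ b

/-- The pairing `⟨f, φ⟩ = Σ_a f_a · φ^a`. -/
def pair (f φ : A → F) : F := ∑ᶠ a, f a * φ a

/-- `D^i = D_1^{i^1} ∘ ⋯ ∘ D_m^{i^m}`. -/
def Dpow (D : Fin m → Derivation 𝔽 F F) (i : Fin m → ℕ) : F → F :=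
  (List.finRange m).foldr (fun μ g => (⇑(D μ))^[i μ] ∘ g) id

/-- `|i| = i^1 + ⋯ + i^m`. -/
def msize {m : ℕ} (i : Fin m → ℕ) : ℕ := ∑ μ, i μ

/-- The differential operator `P(D)L = Σ_i P_i · D^i L`. -/
def applyP (D : Fin m → Derivation 𝔽 F F) (P : (Fin m → ℕ) → F) (L : F) : F :=
  ∑ᶠ i, P i * Dpow D i L

/-- The Lagrange dual operator `P*(D)K = Σ_i (-1)^{|i|} D^i (P_i · K)`. -/
def applyPstar (D : Fin m → Derivation 𝔽 F F) (P : (Fin m → ℕ) → F) (K : F) : F :=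
  ∑ᶠ i, (-1 : F) ^ msize i * Dpow D i (P i * K)

/-- The jet map `(jφ)^a = Σ_{i,α} j^a_{iα} · D^i φ^α`; here `jc a i α` denotes `j^a_{iα}`. -/
def jmap (D : Fin m → Derivation 𝔽 F F) (jc : A → (Fin m → ℕ) → A' → F)
    (φ : A' → F) (a : A) : F :=
  ∑ᶠ i, ∑ᶠ α, jc a i α * Dpow D i (φ α)

/-- The Lagrange dual `(j*f)_α = Σ_{a,i} (-1)^{|i|} D^i (j^a_{iα} · f_a)`. -/
def jstar (D : Fin m → Derivation 𝔽 F F) (jc : A → (Fin m → ℕ) → A' → F)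
    (f : A → F) (α : A') : F :=
  ∑ᶠ a, ∑ᶠ i, (-1 : F) ^ msize i * Dpow D i (jc a i α * f a)

/-- `(Λf)^α = Σ_{β,i} Λ^{αβ}_i · D^i f_β`; here `Λc α β i` denotes `Λ^{αβ}_i`. -/
def Lam (D : Fin m → Derivation 𝔽 F F) (Λc : A' → A' → (Fin m → ℕ) → F)
    (f : A' → F) (α : A') : F :=
  ∑ᶠ β, ∑ᶠ i, Λc α β i * Dpow D i (f β)

/-- The Lagrange dual `(Λ*f)^α = Σ_{β,i} (-1)^{|i|} D^i (Λ^{βα}_i · f_β)`. -/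
def LamStar (D : Fin m → Derivation 𝔽 F F) (Λc : A' → A' → (Fin m → ℕ) → F)
    (f : A' → F) (α : A') : F :=
  ∑ᶠ β, ∑ᶠ i, (-1 : F) ^ msize i * Dpow D i (Λc β α i * f β)

/-- The variational derivative `δR = j*(∂R)`, where `∂R = (∂_a R)`. -/
def vard (D : Fin m → Derivation 𝔽 F F) (pa : A → Derivation 𝔽 F F)
    (jc : A → (Fin m → ℕ) → A' → F) (R : F) : A' → F :=
  jstar D jc (fun a => pa a R)

/-- The Hamiltonian vector `φ(R) = j(Λ(δR))`. -/
def hamv (D : Fin m → Derivation 𝔽 F F) (pa : A → Derivation 𝔽 F F)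
    (jc : A → (Fin m → ℕ) → A' → F) (Λc : A' → A' → (Fin m → ℕ) → F) (R : F) : A → F :=
  jmap D jc (Lam D Λc (vard D pa jc R))

/-- The commutator `[ev_ψ, Λ]`, acting with coefficients `ev_ψ(Λ^{αβ}_i)`. -/
def evLam (D : Fin m → Derivation 𝔽 F F) (pa : A → Derivation 𝔽 F F)
    (Λc : A' → A' → (Fin m → ℕ) → F) (ψ : A → F) (f : A' → F) (α : A') : F :=
  ∑ᶠ β, ∑ᶠ i, ev pa ψ (Λc α β i) * Dpow D i (f β)

/-!
Expanding both sides, `⟨j*(∂L), φ⟩ - ev_{jφ}(L)` is a sum of terms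
`(-1)^{|i|} D^i(u) · v - u · D^i(v)` with `u = j^a_{iα} ∂_a L` and `v = φ^α`. By the Leibniz rule
each `D_μ` integrates by parts modulo divergences with sign `-1`, and since the `D_μ` commute,
so does `D^i` with sign `(-1)^{|i|}`. The finiteness hypotheses serve only to bound all the `∑ᶠ`
by one finite box of indices `(a, i, α)`, over which the sums can be exchanged.
-/

section Divergences

variable (D : Fin m → Derivation 𝔽 F F)

def divergences : Submodule 𝔽 F :=
  LinearMap.range (∑ μ, (D μ : F →ₗ[𝔽] F) ∘ₗ LinearMap.proj μ)

variable {D}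

theorem isDiv_iff_mem_divergences {f : F} : IsDiv D f ↔ f ∈ divergences D := by
  simp [IsDiv, divergences, eq_comm]

theorem derivation_mem_divergences (μ : Fin m) (g : F) : D μ g ∈ divergences D :=
  ⟨Pi.single μ g, by simp [Pi.single_apply, apply_ite]⟩

theorem neg_one_pow_mul_mem_divergences (n : ℕ) {f : F} (hf : f ∈ divergences D) :
    (-1 : F) ^ n * f ∈ divergences D := by
  rcases neg_one_pow_eq_or F n with h | h <;> simp [h, hf]

end Divergences

theorem Function.Commute.foldr_iterate_comp {ι α : Type*} {f : ι → α → α} {g : α → α}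
    (hg : ∀ μ, Function.Commute g (f μ)) (i : ι → ℕ) (l : List ι) :
    Function.Commute g (l.foldr (fun μ h => (f μ)^[i μ] ∘ h) id) := by
  induction l with
  | nil => exact Function.Commute.id_right
  | cons μ l ih => exact ((hg μ).iterate_right (i μ)).comp_right ih

section IntegrationByParts

variable {D : Fin m → Derivation 𝔽 F F}

/-- The formal adjoint of `T` is `(-1)^n T`, modulo divergences. -/
def IntegratesByParts (D : Fin m → Derivation 𝔽 F F) (n : ℕ) (T : F → F) : Prop :=
  ∀ u v, (-1 : F) ^ n * T u * v - u * T v ∈ divergences D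

theorem integratesByParts_id : IntegratesByParts D 0 id := by
  simp [IntegratesByParts]

theorem integratesByParts_derivation (μ : Fin m) : IntegratesByParts D 1 (D μ) := by
  intro u v
  have hleibniz : D μ (u * v) = D μ u * v + u * D μ v := by
    rw [Derivation.leibniz, smul_eq_mul, smul_eq_mul]; ring
  rw [show (-1 : F) ^ 1 * D μ u * v - u * D μ v = -D μ (u * v) by rw [hleibniz]; ring]
  exact neg_mem (derivation_mem_divergences μ _)

theorem IntegratesByParts.comp {n k : ℕ} {T S : F → F} (hT : IntegratesByParts D n T)
    (hS : IntegratesByParts D k S) (hTS : Function.Commute T S) :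
    IntegratesByParts D (n + k) (T ∘ S) := by
  intro u v
  -- moving `T` and then `S` across the product reverses their order
  have hsplit : (-1 : F) ^ (n + k) * T (S u) * v - u * T (S v)
      = (-1 : F) ^ k * ((-1 : F) ^ n * T (S u) * v - S u * T v)
        + ((-1 : F) ^ k * S u * T v - u * S (T v)) := by
    rw [hTS v]; ring
  rw [Function.comp_apply, Function.comp_apply, hsplit]
  exact add_mem (neg_one_pow_mul_mem_divergences k (hT _ _)) (hS _ _)

theorem IntegratesByParts.iterate {n : ℕ} {T : F → F} (hT : IntegratesByParts D n T) (k : ℕ) :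
    IntegratesByParts D (n * k) T^[k] := by
  induction k with
  | zero => exact integratesByParts_id
  | succ k ih =>
    rw [Function.iterate_succ', Nat.mul_succ, add_comm]
    exact hT.comp ih (Function.Commute.self_iterate T k)

theorem integratesByParts_Dpow (hDcomm : ∀ μ ν (f : F), D μ (D ν f) = D ν (D μ f))
    (i : Fin m → ℕ) : IntegratesByParts D (msize i) (Dpow D i) := by
  rw [Dpow, msize, Fin.sum_univ_def]
  induction List.finRange m with
  | nil => exact integratesByParts_id
  | cons μ l ih =>
    rw [List.foldr_cons, List.map_cons, List.sum_cons]
    have hμ : IntegratesByParts D (i μ) (D μ)^[i μ] := by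
      simpa using (integratesByParts_derivation μ).iterate (i μ)
    refine hμ.comp ih ?_
    exact (Function.Commute.foldr_iterate_comp (f := fun ν => D ν) (hDcomm μ) i l).iterate_left _

end IntegrationByParts

section FiniteSupport

theorem finsum_finsum_eq_sum_sum {α β M : Type*} [AddCommMonoid M] {f : α → β → M}
    {s : Finset α} {t : Finset β} (h : ∀ a b, f a b ≠ 0 → a ∈ s ∧ b ∈ t) :
    ∑ᶠ a, ∑ᶠ b, f a b = ∑ a ∈ s, ∑ b ∈ t, f a b := by
  rw [finsum_eq_sum_of_support_subset _ (s := s) fun a ha => ?_]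
  · exact Finset.sum_congr rfl fun a _ =>
      finsum_eq_sum_of_support_subset _ fun b hb => (h a b hb).2
  · obtain ⟨b, hb⟩ : ∃ b, f a b ≠ 0 := by
      by_contra! hzero
      exact ha (finsum_eq_zero_of_forall_eq_zero hzero)
    exact (h a b hb).1

theorem exists_finset_box_of_finite {α β γ : Type*} {s : Set α} (hs : s.Finite)
    {t : α → Set (β × γ)} (ht : ∀ a, (t a).Finite) :
    ∃ (S : Finset α) (I : Finset β) (W : Finset γ),
      (∀ a ∈ s, a ∈ S) ∧ ∀ a ∈ S, ∀ p ∈ t a, p.1 ∈ I ∧ p.2 ∈ W := by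
  classical
  refine ⟨hs.toFinset, hs.toFinset.biUnion fun a => (ht a).toFinset.image Prod.fst,
    hs.toFinset.biUnion fun a => (ht a).toFinset.image Prod.snd, fun a ha => by simpa using ha,
    fun a ha p hp => ?_⟩
  simp only [Finset.mem_biUnion, Finset.mem_image, Set.Finite.mem_toFinset]
  exact ⟨⟨a, by simpa using ha, p, hp, rfl⟩, ⟨a, by simpa using ha, p, hp, rfl⟩⟩

variable {D : Fin m → Derivation 𝔽 F F} {pa : A → Derivation 𝔽 F F}
  {jc : A → (Fin m → ℕ) → A' → F} {L : F} {S : Finset A} {I : Finset (Fin m → ℕ)}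
  {W : Finset A'}

theorem Dpow_zero (i : Fin m → ℕ) : Dpow D i 0 = 0 := by
  rw [Dpow]
  induction List.finRange m with
  | nil => rfl
  | cons μ l ih =>
    rw [List.foldr_cons, Function.comp_apply, ih]
    exact Function.iterate_fixed (map_zero _) _

theorem pair_jstar_eq_sum (hS : ∀ a, pa a L ≠ 0 → a ∈ S)
    (hbox : ∀ a ∈ S, ∀ i α, jc a i α ≠ 0 → i ∈ I ∧ α ∈ W) (φ : A' → F) :
    pair (jstar D jc fun a => pa a L) φ
      = ∑ a ∈ S, ∑ i ∈ I, ∑ α ∈ W, (-1 : F) ^ msize i * Dpow D i (jc a i α * pa a L) * φ α := by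
  have hterm : ∀ a i α, (-1 : F) ^ msize i * Dpow D i (jc a i α * pa a L) ≠ 0 →
      a ∈ S ∧ i ∈ I ∧ α ∈ W := by
    intro a i α h
    have hpa : pa a L ≠ 0 := fun h0 => h (by rw [h0, mul_zero, Dpow_zero, mul_zero])
    have hjc : jc a i α ≠ 0 := fun h0 => h (by rw [h0, zero_mul, Dpow_zero, mul_zero])
    exact ⟨hS a hpa, hbox a (hS a hpa) i α hjc⟩
  have hjstar : ∀ α, jstar D jc (fun a => pa a L) α
      = ∑ a ∈ S, ∑ i ∈ I, (-1 : F) ^ msize i * Dpow D i (jc a i α * pa a L) := fun α =>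
    finsum_finsum_eq_sum_sum fun a i h => ⟨(hterm a i α h).1, (hterm a i α h).2.1⟩
  rw [pair, finsum_eq_sum_of_support_subset _ (s := W) fun α hα => ?_]
  · simp_rw [hjstar, Finset.sum_mul]
    rw [Finset.sum_comm]
    exact Finset.sum_congr rfl fun a _ => Finset.sum_comm
  · have hne := left_ne_zero_of_mul hα
    rw [hjstar] at hne
    obtain ⟨a, -, hne⟩ := Finset.exists_ne_zero_of_sum_ne_zero hne
    obtain ⟨i, -, hne⟩ := Finset.exists_ne_zero_of_sum_ne_zero hne
    exact (hterm a i α hne).2.2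

theorem ev_jmap_eq_sum (hS : ∀ a, pa a L ≠ 0 → a ∈ S)
    (hbox : ∀ a ∈ S, ∀ i α, jc a i α ≠ 0 → i ∈ I ∧ α ∈ W) (φ : A' → F) :
    ev pa (jmap D jc φ) L = ∑ a ∈ S, ∑ i ∈ I, ∑ α ∈ W, jc a i α * Dpow D i (φ α) * pa a L := by
  rw [ev, finsum_eq_sum_of_support_subset _ (s := S) fun a ha => hS a (right_ne_zero_of_mul ha)]
  refine Finset.sum_congr rfl fun a ha => ?_
  rw [jmap, finsum_finsum_eq_sum_sum fun i α h => hbox a ha i α (left_ne_zero_of_mul h)]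
  simp_rw [Finset.sum_mul]

theorem pair_jstar_sub_ev_jmap_mem_divergences
    (hDcomm : ∀ μ ν (f : F), D μ (D ν f) = D ν (D μ f)) (hS : ∀ a, pa a L ≠ 0 → a ∈ S)
    (hbox : ∀ a ∈ S, ∀ i α, jc a i α ≠ 0 → i ∈ I ∧ α ∈ W) (φ : A' → F) :
    pair (jstar D jc fun a => pa a L) φ - ev pa (jmap D jc φ) L ∈ divergences D := by
  rw [pair_jstar_eq_sum hS hbox, ev_jmap_eq_sum hS hbox]
  simp only [← Finset.sum_sub_distrib]
  refine sum_mem fun a _ => sum_mem fun i _ => sum_mem fun α _ => ?_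
  convert integratesByParts_Dpow hDcomm i (jc a i α * pa a L) (φ α) using 1
  ring

end FiniteSupport

theorem stmt_11_general
    {𝔽 : Type*} [Field 𝔽] {F : Type*} [CommRing F] [Algebra 𝔽 F]
    {m : ℕ} {A A' : Type*}
    (D : Fin m → Derivation 𝔽 F F)
    (hDcomm : ∀ μ ν (f : F), D μ (D ν f) = D ν (D μ f))
    (pa : A → Derivation 𝔽 F F)
    (hpafin : ∀ f : F, {a : A | pa a f ≠ 0}.Finite)
    (jc : A → (Fin m → ℕ) → A' → F)
    (hjfin : ∀ a : A, {p : (Fin m → ℕ) × A' | jc a p.1 p.2 ≠ 0}.Finite)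
    (L : F) (φ : A' → F) :
    IsDiv D (pair (jstar D jc (fun a => pa a L)) φ - ev pa (jmap D jc φ) L) := by
  obtain ⟨S, I, W, hS, hbox⟩ := exists_finset_box_of_finite (hpafin L) hjfin
  exact isDiv_iff_mem_divergences.2 <|
    pair_jstar_sub_ev_jmap_mem_divergences hDcomm hS (fun a ha i α => hbox a ha (i, α)) φ

/-- variational derivative formula:
`⟨j*(∂L), φ⟩ - ev_{jφ}(L) ∈ Div F^M` for all `L ∈ F`, `φ ∈ F^{A'}`. -/
theorem stmt_11
    {𝔽 : Type*} [Field 𝔽] [CharZero 𝔽] {F : Type*} [CommRing F] [Algebra 𝔽 F]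
    {m : ℕ} {A A' : Type*}
    (D : Fin m → Derivation 𝔽 F F)
    (hDcomm : ∀ μ ν (f : F), D μ (D ν f) = D ν (D μ f))
    (pa : A → Derivation 𝔽 F F)
    (hpacomm : ∀ a b (f : F), pa a (pa b f) = pa b (pa a f))
    (hpafin : ∀ f : F, {a : A | pa a f ≠ 0}.Finite)
    (jc : A → (Fin m → ℕ) → A' → F)
    (hjfin : ∀ a : A, {p : (Fin m → ℕ) × A' | jc a p.1 p.2 ≠ 0}.Finite)
    (L : F) (φ : A' → F) :
    IsDiv D (pair (jstar D jc (fun a => pa a L)) φ - ev pa (jmap D jc φ) L) :=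
  stmt_11_general D hDcomm pa hpafin jc hjfin L φ
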